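/- arXiv:math-ph/9805022 — 5 statements merged into one kernel-verified Lean document; each statement's English description precedes it below -/
import Mathlib

section
/- Let Φ(ω) = θ(ω) − ∫_{−∞}^{ω} e^{−π s²} ds, where θ is the Heaviside step function (θ(ω)=0 for ω<0, θ(ω)=1 for ω≥0). Then the L¹ norm of Φ on ℝ equals 1/π. -/
open MeasureTheory Real

/-- The Heaviside step function: `0` for negative argument, `1` otherwise. -/
noncomputable def heaviside (ω : ℝ) : ℝ := if 0 ≤ ω then 1 else 0

/-- `Φ(ω) = θ(ω) − ∫_{−∞}^{ω} e^{−π s²} ds`. -/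
noncomputable def Phi (ω : ℝ) : ℝ :=
  heaviside ω - ∫ s in Set.Iic ω, Real.exp (-π * s ^ 2)

/-!
`|Φ(ω)|` is the Gaussian tail `A(|ω|) = ∫_{|ω|}^∞ e^{-π s²} ds`, so `‖Φ‖₁ = 2 ∫_0^∞ A`.
Since `A' = -g` and `(g / 2π)' = -s g`, the function `y A(y) - g(y) / 2π` is a primitive of `A`;
it vanishes at infinity because `y A(y) ≤ ∫_y^∞ s g(s) ds = g(y) / 2π`, and equals `-1 / 2π` at `0`.
-/

open Set Filter Topology

noncomputable def gaussianTail (b ω : ℝ) : ℝ := ∫ s in Ioi ω, exp (-b * s ^ 2)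

section GaussianTail

variable {b : ℝ}

lemma tendsto_exp_neg_mul_sq_atTop (hb : 0 < b) :
    Tendsto (fun x : ℝ => exp (-b * x ^ 2)) atTop (𝓝 0) :=
  tendsto_exp_atBot.comp <|
    (tendsto_pow_atTop two_ne_zero).const_mul_atTop_of_neg (neg_lt_zero.2 hb)

lemma hasDerivAt_exp_neg_mul_sq_div (hb : b ≠ 0) (x : ℝ) :
    HasDerivAt (fun y : ℝ => -exp (-b * y ^ 2) / (2 * b)) (x * exp (-b * x ^ 2)) x := by
  refine ((((hasDerivAt_pow 2 x).const_mul (-b)).exp.neg).div_const (2 * b)).congr_deriv ?_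
  field_simp
  ring

lemma integral_Ioi_mul_exp_neg_mul_sq (hb : 0 < b) {a : ℝ} (ha : 0 ≤ a) :
    ∫ s in Ioi a, s * exp (-b * s ^ 2) = exp (-b * a ^ 2) / (2 * b) := by
  have hlim : Tendsto (fun y : ℝ => -exp (-b * y ^ 2) / (2 * b)) atTop (𝓝 0) := by
    simpa using (tendsto_exp_neg_mul_sq_atTop hb).neg.div_const (2 * b)
  rw [integral_Ioi_of_hasDerivAt_of_nonneg' (fun x _ => hasDerivAt_exp_neg_mul_sq_div hb.ne' x)
    (fun x hx => mul_nonneg (ha.trans hx.out.le) (exp_pos _).le) hlim]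
  ring

lemma gaussianTail_nonneg (b ω : ℝ) : 0 ≤ gaussianTail b ω :=
  setIntegral_nonneg measurableSet_Ioi fun _ _ => (exp_pos _).le

lemma integral_Iic_add_gaussianTail (hb : 0 < b) (ω : ℝ) :
    (∫ s in Iic ω, exp (-b * s ^ 2)) + gaussianTail b ω = sqrt (π / b) := by
  rw [gaussianTail, ← integral_gaussian b]
  exact intervalIntegral.integral_Iic_add_Ioi (integrable_exp_neg_mul_sq hb).integrableOn
    (integrable_exp_neg_mul_sq hb).integrableOn

lemma integral_Iic_exp_neg_mul_sq_eq_gaussianTail_neg (b ω : ℝ) :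
    ∫ s in Iic ω, exp (-b * s ^ 2) = gaussianTail b (-ω) := by
  have h := integral_comp_neg_Ioi (-ω) fun s => exp (-b * s ^ 2)
  simp only [neg_neg, neg_sq] at h
  exact h.symm

lemma hasDerivAt_gaussianTail (hb : 0 < b) (ω : ℝ) :
    HasDerivAt (gaussianTail b) (-exp (-b * ω ^ 2)) ω := by
  have hint := integrable_exp_neg_mul_sq hb
  have hsplit : gaussianTail b = fun x => (∫ s in x..0, exp (-b * s ^ 2)) + gaussianTail b 0 := by
    funext x
    exact (intervalIntegral.integral_interval_add_Ioi hint.integrableOn hint.integrableOn).symm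
  rw [hsplit]
  refine (intervalIntegral.integral_hasDerivAt_left hint.intervalIntegrable ?_ ?_).add_const _
  · exact hint.aestronglyMeasurable.stronglyMeasurableAtFilter
  · fun_prop

lemma mul_gaussianTail_le (hb : 0 < b) {y : ℝ} (hy : 0 ≤ y) :
    y * gaussianTail b y ≤ exp (-b * y ^ 2) / (2 * b) := by
  rw [← integral_Ioi_mul_exp_neg_mul_sq hb hy, gaussianTail, ← integral_const_mul]
  refine setIntegral_mono_on ((integrable_exp_neg_mul_sq hb).integrableOn.const_mul y)
    (integrable_mul_exp_neg_mul_sq hb).integrableOn measurableSet_Ioi fun s hs => ?_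
  exact mul_le_mul_of_nonneg_right hs.out.le (exp_pos _).le

lemma integral_Ioi_gaussianTail (hb : 0 < b) :
    ∫ ω in Ioi 0, gaussianTail b ω = 1 / (2 * b) := by
  set F : ℝ → ℝ := fun y => y * gaussianTail b y + -exp (-b * y ^ 2) / (2 * b)
  have hF : ∀ x ∈ Ici (0 : ℝ), HasDerivAt F (gaussianTail b x) x := fun x _ => by
    refine (((hasDerivAt_id' x).mul (hasDerivAt_gaussianTail hb x)).add
      (hasDerivAt_exp_neg_mul_sq_div hb.ne' x)).congr_deriv ?_
    ring
  have hgauss := (tendsto_exp_neg_mul_sq_atTop hb).div_const (2 * b)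
  rw [zero_div] at hgauss
  have hmul : Tendsto (fun y => y * gaussianTail b y) atTop (𝓝 0) := by
    refine squeeze_zero' ?_ ?_ hgauss
    · filter_upwards [eventually_ge_atTop 0] with y hy
      exact mul_nonneg hy (gaussianTail_nonneg b y)
    · filter_upwards [eventually_ge_atTop 0] with y hy
      exact mul_gaussianTail_le hb hy
  have hlim : Tendsto F atTop (𝓝 0) := by
    have h := hmul.add hgauss.neg
    rw [neg_zero, add_zero] at h
    exact h.congr fun y => by simp only [F]; ring
  rw [integral_Ioi_of_hasDerivAt_of_nonneg' hF (fun x _ => gaussianTail_nonneg b x) hlim]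
  norm_num [F]
  ring

end GaussianTail

lemma abs_Phi (ω : ℝ) : |Phi ω| = gaussianTail π |ω| := by
  have htotal := integral_Iic_add_gaussianTail pi_pos ω
  rw [div_self pi_ne_zero, sqrt_one] at htotal
  rcases le_or_gt 0 ω with hω | hω
  · have h : Phi ω = gaussianTail π ω := by
      rw [Phi, heaviside, if_pos hω]
      linarith
    rw [h, abs_of_nonneg (gaussianTail_nonneg π ω), abs_of_nonneg hω]
  · rw [Phi, heaviside, if_neg hω.not_ge, zero_sub, abs_neg, integral_Iic_exp_neg_mul_sq_eq_gaussianTail_neg,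
      abs_of_nonneg (gaussianTail_nonneg π _), abs_of_neg hω]

/-- The `L¹` norm of `Φ` on `ℝ` equals `1/π`. -/
theorem stmt_0 : ∫ ω : ℝ, |Phi ω| = 1 / π := by
  simp_rw [abs_Phi]
  rw [integral_comp_abs, integral_Ioi_gaussianTail pi_pos]
  field_simp
end

section
/- Let H(s) be a continuously differentiable family of bounded self-adjoint operators and P(s) a continuously differentiable family of orthogonal projections with [H(s), P(s)] = 0. Let U_A(s) solve i U̇_A(s) = (τ H(s) + i [Ṗ(s), P(s)]) U_A(s) with U_A(0) = 1. Then U_A(s) P(0) = P(s) U_A(s) for all s. -/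
/-!
With `A s = -iτ H s + [Ṗ s, P s]` the evolution equation reads `U̇ = A U`. Differentiating
`P² = P` gives `P Ṗ P = 0`, and together with `[H, P] = 0` this yields Kato's identity
`[A, P] = Ṗ`. Hence `t ↦ P t U t - U t P 0` solves the same linear equation `Ẋ = A X` and
vanishes at `0`; uniqueness for linear equations with continuous coefficients forces it to
vanish identically.
-/

open Topology

theorem IsIdempotentElem.mul_mul_eq_zero_of_add_eq {R : Type*} [Ring R] {p d : R}
    (hp : IsIdempotentElem p) (hd : d * p + p * d = d) : p * d * p = 0 := by
  have h : p * (d * p + p * d) * p = p * d * p := by rw [hd]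
  rwa [mul_add, add_mul, mul_assoc, mul_assoc, hp.eq, ← mul_assoc, ← mul_assoc, hp.eq,
    add_eq_right] at h

theorem IsIdempotentElem.add_commutator_mul_sub_mul_eq {R : Type*} [Ring R] {p d k : R}
    (hp : IsIdempotentElem p) (hd : d * p + p * d = d) (hk : Commute k p) :
    (k + (d * p - p * d)) * p - p * (k + (d * p - p * d)) = d := by
  have hpdp := hp.mul_mul_eq_zero_of_add_eq hd
  calc (k + (d * p - p * d)) * p - p * (k + (d * p - p * d))
      = (k * p - p * k) + (d * (p * p) + p * p * d) - 2 * (p * d * p) := by noncomm_ring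
    _ = d := by rw [hk.eq, hp.eq, hpdp, hd, sub_self, zero_add, mul_zero, sub_zero]

theorem HasDerivAt.mul_add_mul_eq_of_isIdempotentElem {𝕜 𝔸 : Type*}
    [NontriviallyNormedField 𝕜] [NormedRing 𝔸] [NormedAlgebra 𝕜 𝔸] {P : 𝕜 → 𝔸} {P' : 𝔸} {s : 𝕜}
    (hP : ∀ t, IsIdempotentElem (P t)) (hP' : HasDerivAt P P' s) : P' * P s + P s * P' = P' := by
  have hPP : HasDerivAt (P * P) (P' * P s + P s * P') s := hP'.mul hP'
  rw [show P * P = P from funext hP] at hPP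
  exact hPP.unique hP'

theorem lipschitzWith_mul_left {𝔸 : Type*} [NonUnitalSeminormedRing 𝔸] (a : 𝔸) :
    LipschitzWith ‖a‖₊ (a * ·) :=
  AddMonoidHomClass.lipschitz_of_bound_nnnorm (AddMonoidHom.mulLeft a) _ (nnnorm_mul_le a)

theorem eq_zero_of_hasDerivAt_mul_left {𝔸 : Type*} [NormedRing 𝔸] [NormedSpace ℝ 𝔸]
    {A f : ℝ → 𝔸} (hA : Continuous A) (hf : ∀ t, HasDerivAt f (A t * f t) t) {t₀ : ℝ}
    (hf₀ : f t₀ = 0) (t : ℝ) : f t = 0 := by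
  have hclosed : IsClosed {t | f t = 0} :=
    isClosed_eq (continuous_iff_continuousAt.2 fun t => (hf t).continuousAt) continuous_const
  have hopen : IsOpen {t | f t = 0} := by
    refine isOpen_iff_mem_nhds.2 fun t₁ (ht₁ : f t₁ = 0) => ?_
    have hbound : ∀ᶠ t in 𝓝 t₁, ‖A t‖₊ ≤ ‖A t₁‖₊ + 1 :=
      (hA.nnnorm.continuousAt.eventually_lt continuousAt_const (lt_add_one _)).mono
        fun _ => le_of_lt
    exact ODE_solution_unique_of_eventually (v := fun t x => A t * x) (s := fun _ => Set.univ)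
      (g := fun _ => 0)
      (hbound.mono fun t ht => ((lipschitzWith_mul_left (A t)).weaken ht).lipschitzOnWith)
      (.of_forall fun t => ⟨hf t, trivial⟩)
      (.of_forall fun t => ⟨by simpa using hasDerivAt_const t (0 : 𝔸), trivial⟩) ht₁
  exact (IsClopen.eq_univ ⟨hclosed, hopen⟩ ⟨t₀, hf₀⟩).ge (Set.mem_univ t)

theorem stmt_7_general {E : Type*} [NormedAddCommGroup E] [InnerProductSpace ℂ E]
    (τ : ℝ)
    (H H' P P' UA UA' : ℝ → E →L[ℂ] E)
    (hHderiv : ∀ s, HasDerivAt H (H' s) s)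
    (hPproj : ∀ s, P s * P s = P s)
    (hPderiv : ∀ s, HasDerivAt P (P' s) s) (hP'cont : Continuous P')
    (hcomm : ∀ s, H s * P s = P s * H s)
    (hUA0 : UA 0 = 1)
    (hUAderiv : ∀ s, HasDerivAt UA (UA' s) s)
    (hUAeq : ∀ s, Complex.I • UA' s =
      ((τ : ℂ) • H s + Complex.I • (P' s * P s - P s * P' s)) * UA s) :
    ∀ s, UA s * P 0 = P s * UA s := by
  set A : ℝ → E →L[ℂ] E := fun s => (-(Complex.I * τ)) • H s + (P' s * P s - P s * P' s)
  have hPcont : Continuous P := continuous_iff_continuousAt.2 fun s => (hPderiv s).continuousAt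
  have hHcont : Continuous H := continuous_iff_continuousAt.2 fun s => (hHderiv s).continuousAt
  have hAcont : Continuous A := by fun_prop
  have hgen : ∀ s, UA' s = A s * UA s := fun s => by
    have h := congrArg ((-Complex.I) • ·) (hUAeq s)
    simpa only [smul_smul, ← smul_mul_assoc, smul_add, neg_mul, Complex.I_mul_I, neg_neg,
      one_smul] using h
  have hkato : ∀ s, A s * P s - P s * A s = P' s := fun s =>
    IsIdempotentElem.add_commutator_mul_sub_mul_eq (hPproj s)
      ((hPderiv s).mul_add_mul_eq_of_isIdempotentElem hPproj)
      ((show Commute (H s) (P s) from hcomm s).smul_left _)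
  have hf : ∀ t, HasDerivAt (fun t => P t * UA t - UA t * P 0)
      (A t * (P t * UA t - UA t * P 0)) t := fun t => by
    refine (((hPderiv t).fun_mul (hUAderiv t)).fun_sub
      ((hUAderiv t).mul_const (P 0))).congr_deriv ?_
    rw [hgen, ← hkato t]
    noncomm_ring
  intro s
  have hf₀ : P 0 * UA 0 - UA 0 * P 0 = 0 := by simp [hUA0]
  exact (sub_eq_zero.1 (eq_zero_of_hasDerivAt_mul_left hAcont hf hf₀ s)).symm

/-- Intertwining property of Kato's adiabatic evolution: if
`i U̇_A(s) = (τ H(s) + i [Ṗ(s),P(s)]) U_A(s)`, `U_A(0) = 1`, where `P(s)` is a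
`C¹` family of orthogonal projections commuting with the `C¹` family of bounded
self-adjoint operators `H(s)`, then `U_A(s) P(0) = P(s) U_A(s)` for all `s`. -/
theorem stmt_7 {E : Type*} [NormedAddCommGroup E] [InnerProductSpace ℂ E]
    [CompleteSpace E]
    (τ : ℝ) (hτ : 0 < τ)
    (H H' P P' UA UA' : ℝ → E →L[ℂ] E)
    (hHsa : ∀ s, IsSelfAdjoint (H s))
    (hHderiv : ∀ s, HasDerivAt H (H' s) s) (hH'cont : Continuous H')
    (hPproj : ∀ s, P s * P s = P s) (hPsa : ∀ s, IsSelfAdjoint (P s))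
    (hPderiv : ∀ s, HasDerivAt P (P' s) s) (hP'cont : Continuous P')
    (hcomm : ∀ s, H s * P s = P s * H s)
    (hUA0 : UA 0 = 1)
    (hUAderiv : ∀ s, HasDerivAt UA (UA' s) s)
    (hUAeq : ∀ s, Complex.I • UA' s =
      ((τ : ℂ) • H s + Complex.I • (P' s * P s - P s * P' s)) * UA s) :
    ∀ s, UA s * P 0 = P s * UA s :=
  stmt_7_general τ H H' P P' UA UA' hHderiv hPproj hPderiv hP'cont hcomm hUA0 hUAderiv hUAeq
end

section
/- In the setting of the previous construction, ‖X_Δ(s) P(s)‖ ≤ 2‖Ṗ(s)P(s)‖/Δ. -/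
open Real

private lemma aux_bound1_stmt11 (Δ : ℝ) (hΔ : 0 < Δ) (x : ℝ) :
    |(1 - Real.exp (-π * (x / Δ) ^ 2)) / x| ≤ π / Δ ^ 2 * |x| := by
  rcases eq_or_ne x 0 with h | h
  · simp [h]
  · have ht : (0:ℝ) ≤ π * (x / Δ) ^ 2 := by positivity
    have hN0 : 0 ≤ 1 - Real.exp (-π * (x / Δ) ^ 2) := by
      have := Real.exp_le_one_iff.mpr (by nlinarith : -π * (x / Δ) ^ 2 ≤ 0)
      linarith
    have hN : 1 - Real.exp (-π * (x / Δ) ^ 2) ≤ π * (x / Δ) ^ 2 := by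
      have := Real.add_one_le_exp (-(π * (x / Δ) ^ 2))
      have h2 : -(π * (x/Δ)^2) = -π * (x/Δ)^2 := by ring
      linarith [h2 ▸ this]
    rw [abs_div, abs_of_nonneg hN0, div_le_iff₀ (abs_pos.mpr h)]
    have h3 : π * (x / Δ) ^ 2 = π / Δ ^ 2 * x ^ 2 := by field_simp
    calc 1 - Real.exp (-π * (x / Δ) ^ 2) ≤ π / Δ ^ 2 * x ^ 2 := by rw [← h3]; exact hN
      _ = π / Δ ^ 2 * |x| * |x| := by rw [mul_assoc, abs_mul_abs_self, ← sq]

private lemma aux_cont_stmt11 (Δ : ℝ) (hΔ : 0 < Δ) :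
    Continuous (fun x : ℝ => (1 - Real.exp (-π * (x / Δ) ^ 2)) / x) := by
  rw [continuous_iff_continuousAt]
  intro x
  rcases eq_or_ne x 0 with h | h
  · subst h
    have h0 : (fun x : ℝ => (1 - Real.exp (-π * (x / Δ) ^ 2)) / x) 0 = 0 := by simp
    unfold ContinuousAt
    rw [h0]
    apply squeeze_zero_norm (fun x => aux_bound1_stmt11 Δ hΔ x)
    have : Filter.Tendsto (fun x : ℝ => π / Δ ^ 2 * |x|) (nhds 0) (nhds (π / Δ ^ 2 * |(0:ℝ)|)) := by
      exact (continuous_const.mul (continuous_abs)).tendsto 0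
    simpa using this
  · exact ContinuousAt.div (by fun_prop) continuousAt_id h

private lemma aux_bound2_stmt11 (Δ : ℝ) (hΔ : 0 < Δ) (x : ℝ) :
    |(1 - Real.exp (-π * (x / Δ) ^ 2)) / x| ≤ 2 / Δ := by
  rcases le_or_gt (Δ / 2) |x| with h | h
  · have hx : x ≠ 0 := by
      intro h0; rw [h0] at h; simp at h; linarith
    have hN0 : 0 ≤ 1 - Real.exp (-π * (x / Δ) ^ 2) := by
      have := Real.exp_le_one_iff.mpr (by nlinarith [sq_nonneg (x/Δ), Real.pi_pos] : -π * (x / Δ) ^ 2 ≤ 0)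
      linarith
    have hN1 : 1 - Real.exp (-π * (x / Δ) ^ 2) ≤ 1 := by
      have := Real.exp_pos (-π * (x / Δ) ^ 2); linarith
    rw [abs_div, abs_of_nonneg hN0, div_le_div_iff₀ (abs_pos.mpr hx) hΔ]
    calc (1 - Real.exp (-π * (x / Δ) ^ 2)) * Δ ≤ 1 * Δ := by nlinarith
      _ ≤ 2 * |x| := by linarith
  · calc |(1 - Real.exp (-π * (x / Δ) ^ 2)) / x| ≤ π / Δ ^ 2 * |x| := aux_bound1_stmt11 Δ hΔ x
      _ ≤ π / Δ ^ 2 * (Δ / 2) := by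
          apply mul_le_mul_of_nonneg_left (le_of_lt h) (by positivity)
      _ = π / (2 * Δ) := by field_simp
      _ ≤ 2 / Δ := by
          rw [div_le_div_iff₀ (by linarith) hΔ]
          nlinarith [Real.pi_le_four]

/-- Norm estimate on `X_Δ P`: with `X_Δ = A + A†`,
`A = P Ṗ R(0)(1 − g(H/Δ))`, one has `‖X_Δ P‖ ≤ 2‖Ṗ P‖/Δ`. -/
theorem stmt_11 {E : Type*} [NormedAddCommGroup E] [InnerProductSpace ℂ E]
    [CompleteSpace E]
    (Δ : ℝ) (hΔ : 0 < Δ)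
    (H P D R : E →L[ℂ] E)
    (hH : IsSelfAdjoint H)
    (hPproj : P * P = P) (hPsa : IsSelfAdjoint P)
    (hHP : H * P = 0) (hPH : P * H = 0) (hker : ∀ x : E, H x = 0 → P x = x)
    (hDsa : IsSelfAdjoint D) (hD : D = P * D + D * P) (hPDP : P * D * P = 0)
    (hRsa : IsSelfAdjoint R)
    (hRH : R * H = 1 - P) (hHR : H * R = 1 - P) (hRP : R * P = 0) (hPR : P * R = 0) :
    ‖(P * D * (R * (1 - cfc (fun x : ℝ => Real.exp (-π * (x / Δ) ^ 2)) H))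
        + ContinuousLinearMap.adjoint
            (P * D * (R * (1 - cfc (fun x : ℝ => Real.exp (-π * (x / Δ) ^ 2)) H)))) * P‖
      ≤ 2 * ‖D * P‖ / Δ := by
  have hcont := aux_cont_stmt11 Δ hΔ
  have hbd := aux_bound2_stmt11 Δ hΔ
  set g : ℝ → ℝ := fun x => Real.exp (-π * (x / Δ) ^ 2) with hg
  set k : ℝ → ℝ := fun x => (1 - Real.exp (-π * (x / Δ) ^ 2)) / x with hk
  set G := cfc g H with hG
  set K := cfc k H with hKdef
  -- factorization 1 - G = K * H
  have hfact : 1 - G = K * H := by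
    have h1 : K * H = cfc (fun x => k x * x) H := by
      conv_lhs => rw [← cfc_id' ℝ H hH]
      rw [← cfc_mul k (fun x => x) H hcont.continuousOn (continuous_id.continuousOn)]
    have h2 : (fun x : ℝ => k x * x) = fun x => 1 - g x := by
      funext x
      rcases eq_or_ne x 0 with h | h
      · simp [hk, hg, h]
      · simp only [hk, hg, div_mul_cancel₀ _ h]
    rw [h1, h2, cfc_sub _ _ H (continuous_const.continuousOn)
      (by fun_prop : Continuous g).continuousOn, cfc_const_one ℝ H]
  have hsaG : IsSelfAdjoint G := cfc_predicate g H
  -- adjoint computation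
  have hadj : ContinuousLinearMap.adjoint (P * D * (R * (1 - G)))
      = (1 - G) * R * (D * P) := by
    rw [← ContinuousLinearMap.star_eq_adjoint]
    simp only [star_mul, star_sub, star_one, hsaG.star_eq, hRsa.star_eq,
      hDsa.star_eq, hPsa.star_eq]
  -- A * P = 0
  have hAP : (P * D * (R * (1 - G))) * P = 0 := by
    rw [hfact]
    simp only [mul_assoc]
    rw [hHP]
    simp
  -- A† * P = K * (D * P)
  have hA'P : ((1 - G) * R * (D * P)) * P = K * (D * P) := by
    rw [hfact]
    calc K * H * R * (D * P) * P = K * ((H * R) * (D * (P * P))) := by noncomm_ring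
      _ = K * ((1 - P) * (D * P)) := by rw [hHR, hPproj]
      _ = K * (D * P - P * D * P) := by noncomm_ring
      _ = K * (D * P) := by rw [hPDP, sub_zero]
  rw [add_mul, hAP, zero_add, hadj, hA'P]
  calc ‖K * (D * P)‖ ≤ ‖K‖ * ‖D * P‖ := norm_mul_le _ _
    _ ≤ (2 / Δ) * ‖D * P‖ := by
        apply mul_le_mul_of_nonneg_right _ (norm_nonneg _)
        exact norm_cfc_le (by positivity) (fun x _ => hbd x)
    _ = 2 * ‖D * P‖ / Δ := by ring
end

section
/- Let H(s) be a C¹ family of bounded self-adjoint operators with smooth rank-one spectral projection P(s) at eigenvalue 0, such that the spectral measure μ_{φ(s)} of the vector φ(s) = Ṗ(s)ψ(s) (where ψ(s) spans Range P(s)) has no atom at 0 for each s, uniformly continuously in s. Then with Y_Δ(s) = −g(H(s)/Δ)Ṗ(s)P(s) + P(s)Ṗ(s)g(H(s)/Δ), g(x)=exp(−πx²), one has sup_{s∈[0,1]} ‖Y_Δ(s)P(s)‖ → 0 as Δ → 0⁺. -/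
open MeasureTheory Real Filter Set Topology
open scoped InnerProductSpace Polynomial

/-!
Since `P(s)` is the rank-one projection onto `ψ(s)` and `H(s)ψ(s) = 0`, the operator `g(H/Δ)` fixes
`ψ(s)`, and differentiating `P² = P` gives `P Ṗ P = 0`, so `P φ = 0`. Hence `Y_Δ(s) P(s)` is the
rank-one operator `x ↦ -⟪ψ, x⟫ g(H/Δ) φ`, and `‖Y_Δ(s) P(s)‖² ≤ ‖g(H/Δ) φ‖² = ∫ g(x/Δ)² dμ_s`.
These integrals decrease to `μ_s {0} = 0` as `Δ ↓ 0` by dominated convergence, and they are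
continuous in `s`, so by Dini's theorem the convergence is uniform on the compact `[0, 1]`.
-/

theorem gaussian_sq_le_one (Δ x : ℝ) : exp (-π * (x / Δ) ^ 2) ^ 2 ≤ 1 :=
  pow_le_one₀ (exp_nonneg _) (exp_le_one_iff.2 (by nlinarith [pi_pos, sq_nonneg (x / Δ)]))

theorem monotoneOn_gaussian_sq (x : ℝ) :
    MonotoneOn (fun Δ => exp (-π * (x / Δ) ^ 2) ^ 2) (Ioi 0) := by
  intro Δ₁ (h₁ : 0 < Δ₁) Δ₂ _ h₁₂
  have hsq : (x / Δ₂) ^ 2 ≤ (x / Δ₁) ^ 2 := by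
    rw [div_pow, div_pow]
    gcongr
  have hexp : exp (-π * (x / Δ₁) ^ 2) ≤ exp (-π * (x / Δ₂) ^ 2) :=
    exp_le_exp.2 (by nlinarith [pi_pos])
  exact pow_le_pow_left₀ (exp_nonneg _) hexp 2

theorem tendsto_gaussian_sq_nhdsGT_zero (x : ℝ) :
    Tendsto (fun Δ => exp (-π * (x / Δ) ^ 2) ^ 2) (𝓝[>] 0)
      (𝓝 (({0} : Set ℝ).indicator 1 x)) := by
  rcases eq_or_ne x 0 with rfl | hx
  · simp
  have hsq : Tendsto (fun Δ : ℝ => (x / Δ) ^ 2) (𝓝[>] 0) atTop := by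
    simp only [div_eq_mul_inv, mul_pow]
    exact ((tendsto_pow_atTop two_ne_zero).comp tendsto_inv_nhdsGT_zero).const_mul_atTop
      (by positivity)
  have hexp :=
    (tendsto_exp_atBot.comp (hsq.const_mul_atTop_of_neg (neg_neg_of_pos pi_pos))).pow 2
  simpa [hx] using hexp

section FiniteMeasure

variable (μ : Measure ℝ) [IsFiniteMeasure μ]

theorem monotoneOn_integral_gaussian_sq :
    MonotoneOn (fun Δ => ∫ x, exp (-π * (x / Δ) ^ 2) ^ 2 ∂μ) (Ioi 0) := by
  intro Δ₁ h₁ Δ₂ h₂ h₁₂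
  have hint : ∀ Δ, Integrable (fun x => exp (-π * (x / Δ) ^ 2) ^ 2) μ := fun Δ =>
    (integrable_const 1).mono' (by fun_prop) (ae_of_all _ fun x => by
      rw [norm_of_nonneg (by positivity)]
      exact gaussian_sq_le_one Δ x)
  exact integral_mono (hint Δ₁) (hint Δ₂) fun x => monotoneOn_gaussian_sq x h₁ h₂ h₁₂

theorem tendsto_integral_gaussian_sq_nhdsGT_zero :
    Tendsto (fun Δ => ∫ x, exp (-π * (x / Δ) ^ 2) ^ 2 ∂μ) (𝓝[>] 0) (𝓝 (μ.real {0})) := by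
  rw [← integral_indicator_one (measurableSet_singleton 0)]
  refine tendsto_integral_filter_of_dominated_convergence (fun _ => 1)
    (Eventually.of_forall fun Δ => by fun_prop)
    (Eventually.of_forall fun Δ => ae_of_all _ fun x => ?_)
    (integrable_const 1) (ae_of_all _ tendsto_gaussian_sq_nhdsGT_zero)
  rw [norm_of_nonneg (by positivity)]
  exact gaussian_sq_le_one Δ x

end FiniteMeasure

/-- Dini's theorem along `𝓝[>] a`. -/
theorem tendstoUniformlyOn_nhdsGT_of_monotoneOn {X : Type*} [TopologicalSpace X] {K : Set X}
    (hK : IsCompact K) {F : ℝ → X → ℝ} {f : X → ℝ} {a : ℝ}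
    (hF_cont : ∀ t, a < t → ContinuousOn (F t) K)
    (hF_mono : ∀ x ∈ K, MonotoneOn (F · x) (Ioi a)) (hf : ContinuousOn f K)
    (h_tendsto : ∀ x ∈ K, Tendsto (F · x) (𝓝[>] a) (𝓝 (f x))) :
    TendstoUniformlyOn F f (𝓝[>] a) K := by
  -- `atTop` on `(Ioi a)ᵒᵈ` is `atBot` on `Ioi a`, which maps onto `𝓝[>] a`.
  let F' : (Ioi a)ᵒᵈ → X → ℝ := fun t => F (OrderDual.ofDual t : Ioi a)
  have hF' : TendstoUniformlyOn F' f atTop K :=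
    Antitone.tendstoUniformlyOn_of_forall_tendsto hK
      (fun t => hF_cont _ (OrderDual.ofDual t : Ioi a).2)
      (fun x hx s t hst => hF_mono x hx (OrderDual.ofDual t : Ioi a).2
        (OrderDual.ofDual s : Ioi a).2 hst) hf
      (fun x hx => (tendsto_comp_coe_Ioi_atBot).2 (h_tendsto x hx))
  rw [← map_coe_Ioi_atBot]
  exact fun u hu => hF' u hu

theorem tendsto_iSup_of_sq_le_of_tendstoUniformlyOn {ι X : Type*} {l : Filter ι} {K : Set X}
    {F Φ : ι → X → ℝ} (hΦ : TendstoUniformlyOn Φ 0 l K) (hF : ∀ i, ∀ x ∈ K, 0 ≤ F i x)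
    (hFΦ : ∀ i, ∀ x ∈ K, F i x ^ 2 ≤ Φ i x) :
    Tendsto (fun i => ⨆ x : K, F i x) l (𝓝 0) := by
  rw [Metric.tendsto_nhds]
  intro ε hε
  filter_upwards [Metric.tendstoUniformlyOn_iff.1 hΦ ((ε / 2) ^ 2) (by positivity)] with i hi
  have hle : ⨆ x : K, F i x ≤ ε / 2 := by
    refine Real.iSup_le (fun ⟨x, hx⟩ => ?_) (by positivity)
    have hsq : F i x ^ 2 < (ε / 2) ^ 2 :=
      (hFΦ i x hx).trans_lt ((le_abs_self _).trans_lt (by simpa [Real.dist_eq] using hi x hx))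
    exact ((pow_lt_pow_iff_left₀ (hF i x hx) (by positivity) two_ne_zero).1 hsq).le
  rw [Real.dist_eq, sub_zero, abs_of_nonneg (Real.iSup_nonneg fun x : K => hF i x x.2)]
  linarith

theorem exists_tendstoUniformlyOn_polynomial_eval {a b : ℝ} {f : ℝ → ℝ}
    (hf : ContinuousOn f (Icc a b)) :
    ∃ p : ℕ → ℝ[X], TendstoUniformlyOn (fun n x => (p n).eval x) f atTop (Icc a b) := by
  choose p hp using fun n : ℕ =>
    exists_polynomial_near_of_continuousOn a b f hf (1 / (n + 1)) Nat.one_div_pos_of_nat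
  refine ⟨p, Metric.tendstoUniformlyOn_iff.2 fun ε hε => ?_⟩
  obtain ⟨N, hN⟩ := exists_nat_one_div_lt hε
  filter_upwards [eventually_ge_atTop N] with n hn x hx
  rw [dist_comm, Real.dist_eq]
  refine (hp n x hx).trans_le (hN.le.trans' ?_)
  gcongr

theorem HasDerivAt.mul_mul_eq_zero_of_isIdempotentElem {𝕜 A : Type*}
    [NontriviallyNormedField 𝕜] [NormedRing A] [NormedAlgebra 𝕜 A] {P : 𝕜 → A} {P' : A} {s : 𝕜}
    (hP : HasDerivAt P P' s) (hidem : ∀ t, IsIdempotentElem (P t)) : P s * P' * P s = 0 := by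
  have hsq : HasDerivAt (fun t => P t * P t) (P' * P s + P s * P') s := hP.mul hP
  simp only [fun t => (hidem t).eq] at hsq
  have h := congrArg (· * P s) (hsq.unique hP)
  simp only [add_mul, mul_assoc, (hidem s).eq] at h
  simpa [mul_assoc] using h

theorem ContinuousLinearMap.aeval_apply_of_apply_eq_smul {V : Type*} [NormedAddCommGroup V]
    [NormedSpace ℂ V] {a : V →L[ℂ] V} {v : V} {r : ℝ} (hv : a v = r • v) (p : ℝ[X]) :
    Polynomial.aeval a p v = p.eval r • v := by
  induction p using Polynomial.induction_on' with
  | add p q hp hq => simp [hp, hq, add_smul]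
  | monomial n c =>
    have hpow : (a ^ n) v = (r ^ n) • v := by
      induction n with
      | zero => simp
      | succ m ih =>
        rw [pow_succ', mul_apply_eq_comp, ih, map_smul_of_tower, hv, smul_smul, pow_succ]
    simp [Algebra.algebraMap_eq_smul_one, hpow, smul_smul]

section InnerProductSpace

variable {E : Type*} [NormedAddCommGroup E] [InnerProductSpace ℂ E]

theorem isIdempotentElem_of_apply_eq_inner_smul {P : E →L[ℂ] E} {ψ : E} (hψ : ‖ψ‖ = 1)
    (hP : ∀ x, P x = ⟪ψ, x⟫_ℂ • ψ) : IsIdempotentElem P := by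
  ext x
  simp [hP, hψ]

theorem norm_neg_mul_add_mul_mul_le {A P P' : E →L[ℂ] E} {ψ : E} (hψ : ‖ψ‖ = 1)
    (hP : ∀ x, P x = ⟪ψ, x⟫_ℂ • ψ) (hAψ : A ψ = ψ) (hPP'P : P * P' * P = 0) :
    ‖(-(A * (P' * P)) + P * P' * A) * P‖ ≤ ‖A (P' ψ)‖ := by
  have hPψ : P ψ = ψ := by rw [hP, inner_self_eq_one_of_norm_eq_one hψ, one_smul]
  have hPφ : P (P' ψ) = 0 := by simpa [hPψ] using congrArg (· ψ) hPP'P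
  have happly : ∀ x, ((-(A * (P' * P)) + P * P' * A) * P) x = -(⟪ψ, x⟫_ℂ • A (P' ψ)) :=
    fun x => by simp [hP x, hAψ, hPφ, hPψ]
  refine ContinuousLinearMap.opNorm_le_bound _ (norm_nonneg _) fun x => ?_
  calc ‖((-(A * (P' * P)) + P * P' * A) * P) x‖ = ‖⟪ψ, x⟫_ℂ‖ * ‖A (P' ψ)‖ := by
        rw [happly, norm_neg, norm_smul]
    _ ≤ ‖ψ‖ * ‖x‖ * ‖A (P' ψ)‖ := by gcongr; exact norm_inner_le_norm _ _
    _ = ‖A (P' ψ)‖ * ‖x‖ := by rw [hψ]; ring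

variable [CompleteSpace E]

theorem cfc_apply_of_apply_eq_smul {a : E →L[ℂ] E} (ha : IsSelfAdjoint a) {v : E} {r : ℝ}
    (hv : a v = r • v) {f : ℝ → ℝ} (hf : Continuous f) : cfc f a v = f r • v := by
  set R := ‖a‖ * ‖(1 : E →L[ℂ] E)‖ + |r|
  have hspec : spectrum ℝ a ⊆ Icc (-R) R := fun x hx => by
    have := spectrum.norm_le_norm_mul_of_mem hx
    rw [Real.norm_eq_abs] at this
    exact abs_le.mp (by linarith [abs_nonneg r])
  have hr : r ∈ Icc (-R) R := abs_le.mp (by simp [R]; positivity)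
  obtain ⟨p, hp⟩ := exists_tendstoUniformlyOn_polynomial_eval (a := -R) (b := R) hf.continuousOn
  have hlim : Tendsto (fun n => cfc (p n).eval a v) atTop (𝓝 (cfc f a v)) :=
    ((ContinuousLinearMap.apply ℂ E v).continuous.tendsto _).comp
      (tendsto_cfc_fun (hp.mono hspec) (Eventually.of_forall fun n => (p n).continuousOn))
  have hlim' : Tendsto (fun n => cfc (p n).eval a v) atTop (𝓝 (f r • v)) := by
    simp only [cfc_polynomial _ a ha, ContinuousLinearMap.aeval_apply_of_apply_eq_smul hv]
    exact (hp.tendsto_at hr).smul_const v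
  exact tendsto_nhds_unique hlim hlim'

theorem norm_cfc_apply_sq {a : E →L[ℂ] E} (ha : IsSelfAdjoint a) {g : ℝ → ℝ}
    (hg : ContinuousOn g (spectrum ℝ a)) (v : E) :
    ‖cfc g a v‖ ^ 2 = RCLike.re ⟪v, cfc (fun x => g x ^ 2) a v⟫_ℂ := by
  have hsymm :=
    ContinuousLinearMap.isSelfAdjoint_iff_isSymmetric.1 (cfc_predicate g a) v (cfc g a v)
  simp only [ContinuousLinearMap.coe_coe] at hsymm
  rw [cfc_pow g 2 a hg ha, pow_two (cfc g a), mul_apply_eq_comp, ← hsymm, inner_self_eq_norm_sq]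

end InnerProductSpace

theorem stmt_13_general {E : Type*} [NormedAddCommGroup E] [InnerProductSpace ℂ E]
    [CompleteSpace E]
    (H P P' : ℝ → E →L[ℂ] E) (ψ : ℝ → E) (μ : ℝ → Measure ℝ)
    (hHsa : ∀ s, IsSelfAdjoint (H s))
    (hPderiv : ∀ s, HasDerivAt P (P' s) s)
    (hψ : ∀ s, ‖ψ s‖ = 1) (hHψ : ∀ s, H s (ψ s) = 0)
    (hP : ∀ s, ∀ x, P s x = ⟪ψ s, x⟫_ℂ • ψ s)
    (hμfin : ∀ s, IsFiniteMeasure (μ s))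
    (hspec : ∀ s, ∀ f : ℝ → ℝ, Continuous f →
      ⟪P' s (ψ s), cfc f (H s) (P' s (ψ s))⟫_ℂ = ((∫ x, f x ∂(μ s) : ℝ) : ℂ))
    (hatom : ∀ s ∈ Set.Icc (0 : ℝ) 1, μ s {0} = 0)
    (hcont : ∀ Δ : ℝ, 0 < Δ →
      ContinuousOn (fun s => ∫ x, Real.exp (-π * (x / Δ) ^ 2) ^ 2 ∂(μ s))
        (Set.Icc (0 : ℝ) 1)) :
    Tendsto (fun Δ : ℝ => ⨆ s : Set.Icc (0 : ℝ) 1,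
        ‖(-(cfc (fun x : ℝ => Real.exp (-π * (x / Δ) ^ 2)) (H (s : ℝ)) * (P' s * P s))
            + P s * P' s * cfc (fun x : ℝ => Real.exp (-π * (x / Δ) ^ 2)) (H (s : ℝ)))
          * P s‖)
      (nhdsWithin 0 (Set.Ioi 0)) (nhds 0) := by
  have hunif : TendstoUniformlyOn (fun Δ s => ∫ x, exp (-π * (x / Δ) ^ 2) ^ 2 ∂(μ s)) 0
      (𝓝[>] 0) (Icc 0 1) :=
    tendstoUniformlyOn_nhdsGT_of_monotoneOn isCompact_Icc hcont
      (fun s _ => monotoneOn_integral_gaussian_sq (μ s)) continuousOn_const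
      fun s hs => by
        simpa [measureReal_def, hatom s hs] using tendsto_integral_gaussian_sq_nhdsGT_zero (μ s)
  refine tendsto_iSup_of_sq_le_of_tendstoUniformlyOn (F := fun Δ s =>
      ‖(-(cfc (fun x => exp (-π * (x / Δ) ^ 2)) (H s) * (P' s * P s))
        + P s * P' s * cfc (fun x => exp (-π * (x / Δ) ^ 2)) (H s)) * P s‖)
    hunif (fun _ _ _ => norm_nonneg _) fun Δ s _ => ?_
  have hgψ : cfc (fun x => exp (-π * (x / Δ) ^ 2)) (H s) (ψ s) = ψ s := by
    rw [cfc_apply_of_apply_eq_smul (hHsa s) (r := 0) (by simpa using hHψ s) (by fun_prop)]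
    simp
  have hPP'P := (hPderiv s).mul_mul_eq_zero_of_isIdempotentElem
    fun t => isIdempotentElem_of_apply_eq_inner_smul (hψ t) (hP t)
  calc _ ≤ ‖cfc (fun x => exp (-π * (x / Δ) ^ 2)) (H s) (P' s (ψ s))‖ ^ 2 :=
        pow_le_pow_left₀ (norm_nonneg _) (norm_neg_mul_add_mul_mul_le (hψ s) (hP s) hgψ hPP'P) 2
    _ = _ := by
        rw [norm_cfc_apply_sq (hHsa s) (by fun_prop), hspec s _ (by fun_prop)]
        simp

/-- Uniform vanishing of `Y_Δ P`: for a `C¹` family of bounded self-adjoint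
operators `H(s)` with rank-one spectral projections `P(s)` at eigenvalue `0`
spanned by unit vectors `ψ(s)`, if the spectral measures `μ_s` of the vectors
`φ(s) = Ṗ(s)ψ(s)` have no atom at `0`, uniformly continuously in `s` (each
regularized integral is continuous in `s`), then with
`Y_Δ(s) = −g(H(s)/Δ)Ṗ(s)P(s) + P(s)Ṗ(s)g(H(s)/Δ)`, `g(x) = e^{−πx²}`,
one has `sup_{s∈[0,1]} ‖Y_Δ(s)P(s)‖ → 0` as `Δ → 0⁺`. -/
theorem stmt_13 {E : Type*} [NormedAddCommGroup E] [InnerProductSpace ℂ E]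
    [CompleteSpace E]
    (H H' P P' : ℝ → E →L[ℂ] E) (ψ : ℝ → E) (μ : ℝ → Measure ℝ)
    (hHsa : ∀ s, IsSelfAdjoint (H s))
    (hHderiv : ∀ s, HasDerivAt H (H' s) s) (hH'cont : Continuous H')
    (hPderiv : ∀ s, HasDerivAt P (P' s) s) (hP'cont : Continuous P')
    (hψ : ∀ s, ‖ψ s‖ = 1) (hHψ : ∀ s, H s (ψ s) = 0)
    (hP : ∀ s, ∀ x, P s x = ⟪ψ s, x⟫_ℂ • ψ s)
    (hμfin : ∀ s, IsFiniteMeasure (μ s))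
    (hspec : ∀ s, ∀ f : ℝ → ℝ, Continuous f →
      ⟪P' s (ψ s), cfc f (H s) (P' s (ψ s))⟫_ℂ = ((∫ x, f x ∂(μ s) : ℝ) : ℂ))
    (hatom : ∀ s ∈ Set.Icc (0 : ℝ) 1, μ s {0} = 0)
    (hcont : ∀ Δ : ℝ, 0 < Δ →
      ContinuousOn (fun s => ∫ x, Real.exp (-π * (x / Δ) ^ 2) ^ 2 ∂(μ s))
        (Set.Icc (0 : ℝ) 1)) :
    Tendsto (fun Δ : ℝ => ⨆ s : Set.Icc (0 : ℝ) 1,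
        ‖(-(cfc (fun x : ℝ => Real.exp (-π * (x / Δ) ^ 2)) (H (s : ℝ)) * (P' s * P s))
            + P s * P' s * cfc (fun x : ℝ => Real.exp (-π * (x / Δ) ^ 2)) (H (s : ℝ)))
          * P s‖)
      (nhdsWithin 0 (Set.Ioi 0)) (nhds 0) :=
  stmt_13_general H P P' ψ μ hHsa hPderiv hψ hHψ hP hμfin hspec hatom hcont
end

section
/- Let μ be a finite Borel measure on ℝ^d and f ∈ L²(μ) with ∫_{B_I} |f|² dμ ≤ K·I^{2α} for 0 < I < 1, where 0 < α < 1. Then for 0 < ε < 1, ∫_{ℝ^d \ B_ε} |f(k)|²/|k|² dμ(k) ≤ C·ε^{2(α−1)} for some constant C depending only on K, α, and ‖f‖_{L²(μ)}. -/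
/-!
Cover `B_1 ∖ B_ε` by the dyadic shells `B_{2^{-n}} ∖ B_{2^{-n-1}}`, `n ≤ N`, where
`2^{-N-1} < ε ≤ 2^{-N}`. On the `n`-th shell `1/|k|² ≤ 4 · 4^n`, so the ball bound gives it a
contribution `≤ 4K · (2^{-n})^{2α-2}`; since `2α - 2 < 0` these grow geometrically in `n`, and
their sum is dominated by the last term, of order `ε^{2α-2}`. Outside the unit ball
`1/|k|² ≤ 1`, which costs only `‖f‖²_{L²(μ)}`.
-/

open MeasureTheory Metric Finset
open scoped ENNReal

theorem setLIntegral_diff_le_sum_range {α : Type*} [MeasurableSpace α] (μ : Measure α)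
    (g : α → ℝ≥0∞) (A : ℕ → Set α) (N : ℕ) :
    ∫⁻ x in A 0 \ A N, g x ∂μ ≤ ∑ n ∈ range N, ∫⁻ x in A n \ A (n + 1), g x ∂μ := by
  induction N with
  | zero => simp
  | succ N ih =>
    calc ∫⁻ x in A 0 \ A (N + 1), g x ∂μ
        ≤ ∫⁻ x in (A 0 \ A N) ∪ (A N \ A (N + 1)), g x ∂μ :=
          lintegral_mono_set fun x hx => by by_cases h : x ∈ A N <;> simp_all
      _ ≤ (∫⁻ x in A 0 \ A N, g x ∂μ) + ∫⁻ x in A N \ A (N + 1), g x ∂μ :=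
          lintegral_union_le _ _ _
      _ ≤ ∑ n ∈ range (N + 1), ∫⁻ x in A n \ A (n + 1), g x ∂μ := by
          rw [sum_range_succ]
          gcongr

theorem geom_sum_range_succ_le {q : ℝ} (hq : 1 < q) (n : ℕ) :
    ∑ j ∈ range (n + 1), q ^ j ≤ q / (q - 1) * q ^ n := by
  have hq1 : 0 < q - 1 := by linarith
  calc ∑ j ∈ range (n + 1), q ^ j = (q ^ (n + 1) - 1) / (q - 1) := geom_sum_eq hq.ne' _
    _ ≤ q ^ (n + 1) / (q - 1) := by gcongr; linarith
    _ = q / (q - 1) * q ^ n := by rw [pow_succ]; ring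

section DyadicShells

variable {E : Type*} [NormedAddCommGroup E] [MeasurableSpace E]
  {μ : Measure E} {F : E → ℝ}

theorem setLIntegral_div_norm_sq_le (hF : ∀ k, 0 ≤ F k) {s : Set E} (hs : MeasurableSet s)
    {b : ℝ} (hb : 0 < b) (hsb : s ⊆ (ball 0 b)ᶜ) :
    ∫⁻ k in s, ENNReal.ofReal (F k / ‖k‖ ^ 2) ∂μ ≤
      ENNReal.ofReal (1 / b ^ 2) * ∫⁻ k in s, ENNReal.ofReal (F k) ∂μ := by
  rw [← lintegral_const_mul' _ _ ENNReal.ofReal_ne_top]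
  refine setLIntegral_mono' hs fun k hk => ?_
  have hbk : b ≤ ‖k‖ := by simpa using hsb hk
  rw [← ENNReal.ofReal_mul (by positivity), one_div_mul_eq_div]
  gcongr
  exact hF k

theorem setLIntegral_ball_diff_ball_half_div_norm_sq_le [OpensMeasurableSpace E]
    (hF : ∀ k, 0 ≤ F k) {M s a : ℝ} (ha : 0 < a)
    (hball : ∫⁻ k in ball 0 a, ENNReal.ofReal (F k) ∂μ ≤ ENNReal.ofReal (M * a ^ s)) :
    ∫⁻ k in ball 0 a \ ball 0 (a / 2), ENNReal.ofReal (F k / ‖k‖ ^ 2) ∂μ ≤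
      ENNReal.ofReal (4 * M * a ^ (s - 2)) := by
  have hshell : ball (0 : E) a \ ball 0 (a / 2) ⊆ (ball 0 (a / 2))ᶜ := Set.sdiff_subset_compl _ _
  have hpow : a ^ (s - 2) = a ^ s / a ^ 2 := by
    rw [Real.rpow_sub ha, Real.rpow_two]
  calc ∫⁻ k in ball 0 a \ ball 0 (a / 2), ENNReal.ofReal (F k / ‖k‖ ^ 2) ∂μ
      ≤ ENNReal.ofReal (1 / (a / 2) ^ 2) *
          ∫⁻ k in ball 0 a \ ball 0 (a / 2), ENNReal.ofReal (F k) ∂μ :=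
        setLIntegral_div_norm_sq_le hF (measurableSet_ball.diff measurableSet_ball)
          (by positivity) hshell
    _ ≤ ENNReal.ofReal (1 / (a / 2) ^ 2) * ENNReal.ofReal (M * a ^ s) := by
        gcongr
        exact (lintegral_mono_set Set.sdiff_subset).trans hball
    _ = ENNReal.ofReal (4 * M * a ^ (s - 2)) := by
        rw [← ENNReal.ofReal_mul (by positivity), hpow]
        congr 1
        field_simp
        ring

theorem setLIntegral_ball_one_diff_ball_div_norm_sq_le [OpensMeasurableSpace E]
    (hF : ∀ k, 0 ≤ F k) {M s : ℝ} (hM : 0 ≤ M) (hs : s < 2)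
    (hball : ∀ a, 0 < a → a ≤ 1 →
      ∫⁻ k in ball 0 a, ENNReal.ofReal (F k) ∂μ ≤ ENNReal.ofReal (M * a ^ s))
    {ε : ℝ} (hε0 : 0 < ε) (hε1 : ε ≤ 1) :
    ∫⁻ k in ball 0 1 \ ball 0 ε, ENNReal.ofReal (F k / ‖k‖ ^ 2) ∂μ ≤
      ENNReal.ofReal (4 * M * ((2⁻¹ : ℝ) ^ (s - 2) / ((2⁻¹ : ℝ) ^ (s - 2) - 1)) *
        ε ^ (s - 2)) := by
  set q : ℝ := (2⁻¹ : ℝ) ^ (s - 2)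
  have hq : 1 < q := Real.one_lt_rpow_of_pos_of_lt_one_of_neg (by norm_num) (by norm_num)
    (by linarith)
  obtain ⟨N, hNε, hεN⟩ := exists_nat_pow_near_of_lt_one hε0 hε1 (by norm_num : (0 : ℝ) < 2⁻¹)
    (by norm_num)
  set A : ℕ → Set E := fun n => ball 0 ((2⁻¹ : ℝ) ^ n)
  have hshell (n : ℕ) : ∫⁻ k in A n \ A (n + 1), ENNReal.ofReal (F k / ‖k‖ ^ 2) ∂μ ≤
      ENNReal.ofReal (4 * M * q ^ n) := by
    have ha : (0 : ℝ) < (2⁻¹ : ℝ) ^ n := by positivity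
    have hhalf : (2⁻¹ : ℝ) ^ (n + 1) = (2⁻¹ : ℝ) ^ n / 2 := by rw [pow_succ]; ring
    simpa only [A, hhalf, ← Real.rpow_pow_comm (by norm_num : (0 : ℝ) ≤ 2⁻¹)] using
      setLIntegral_ball_diff_ball_half_div_norm_sq_le hF ha
        (hball _ ha (pow_le_one₀ (by norm_num) (by norm_num)))
  have hqN : q ^ N ≤ ε ^ (s - 2) := by
    rw [Real.rpow_pow_comm (by norm_num)]
    exact Real.rpow_le_rpow_of_nonpos hε0 hεN (by linarith)
  calc ∫⁻ k in ball 0 1 \ ball 0 ε, ENNReal.ofReal (F k / ‖k‖ ^ 2) ∂μ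
      ≤ ∫⁻ k in A 0 \ A (N + 1), ENNReal.ofReal (F k / ‖k‖ ^ 2) ∂μ :=
        lintegral_mono_set (Set.sdiff_subset_sdiff (by simp [A]) (ball_subset_ball hNε.le))
    _ ≤ ∑ n ∈ range (N + 1), ENNReal.ofReal (4 * M * q ^ n) :=
        (setLIntegral_diff_le_sum_range μ _ A (N + 1)).trans (sum_le_sum fun n _ => hshell n)
    _ = ENNReal.ofReal (4 * M * ∑ n ∈ range (N + 1), q ^ n) := by
        rw [mul_sum, ENNReal.ofReal_sum_of_nonneg fun n _ => by positivity]
    _ ≤ ENNReal.ofReal (4 * M * (q / (q - 1)) * ε ^ (s - 2)) := by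
        refine ENNReal.ofReal_le_ofReal ?_
        calc 4 * M * ∑ n ∈ range (N + 1), q ^ n ≤ 4 * M * (q / (q - 1) * q ^ N) := by
              gcongr; exact geom_sum_range_succ_le hq N
          _ ≤ 4 * M * (q / (q - 1)) * ε ^ (s - 2) := by
              rw [← mul_assoc]
              gcongr

theorem exists_setLIntegral_compl_ball_div_norm_sq_le [OpensMeasurableSpace E]
    (hF : ∀ k, 0 ≤ F k) {M s : ℝ} (hM : 0 ≤ M) (hs : s < 2)
    (hball : ∀ a, 0 < a → a < 1 →
      ∫⁻ k in ball 0 a, ENNReal.ofReal (F k) ∂μ ≤ ENNReal.ofReal (M * a ^ s))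
    (htot : ∫⁻ k, ENNReal.ofReal (F k) ∂μ ≤ ENNReal.ofReal M) :
    ∃ C, 0 ≤ C ∧ ∀ ε, 0 < ε → ε ≤ 1 →
      ∫⁻ k in (ball 0 ε)ᶜ, ENNReal.ofReal (F k / ‖k‖ ^ 2) ∂μ ≤
        ENNReal.ofReal (C * ε ^ (s - 2)) := by
  set q : ℝ := (2⁻¹ : ℝ) ^ (s - 2)
  have hq : 1 < q := Real.one_lt_rpow_of_pos_of_lt_one_of_neg (by norm_num) (by norm_num)
    (by linarith)
  have hball_le (a : ℝ) (ha0 : 0 < a) (ha1 : a ≤ 1) :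
      ∫⁻ k in ball 0 a, ENNReal.ofReal (F k) ∂μ ≤ ENNReal.ofReal (M * a ^ s) := by
    rcases ha1.lt_or_eq with ha1 | rfl
    · exact hball a ha0 ha1
    · simpa using (setLIntegral_le_lintegral _ _).trans htot
  have hexterior :
      ∫⁻ k in (ball 0 1)ᶜ, ENNReal.ofReal (F k / ‖k‖ ^ 2) ∂μ ≤ ENNReal.ofReal M := by
    calc ∫⁻ k in (ball 0 1)ᶜ, ENNReal.ofReal (F k / ‖k‖ ^ 2) ∂μ
        ≤ ENNReal.ofReal (1 / 1 ^ 2) * ∫⁻ k in (ball 0 1)ᶜ, ENNReal.ofReal (F k) ∂μ :=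
          setLIntegral_div_norm_sq_le hF measurableSet_ball.compl one_pos subset_rfl
      _ ≤ ENNReal.ofReal M := by simpa using (setLIntegral_le_lintegral _ _).trans htot
  refine ⟨4 * M * (q / (q - 1)) + M, by positivity, fun ε hε0 hε1 => ?_⟩
  have hε : 1 ≤ ε ^ (s - 2) :=
    Real.one_le_rpow_of_pos_of_le_one_of_nonpos hε0 hε1 (by linarith)
  calc ∫⁻ k in (ball 0 ε)ᶜ, ENNReal.ofReal (F k / ‖k‖ ^ 2) ∂μ
      ≤ ∫⁻ k in (ball 0 1 \ ball 0 ε) ∪ (ball 0 1)ᶜ, ENNReal.ofReal (F k / ‖k‖ ^ 2) ∂μ :=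
        lintegral_mono_set fun k hk => by by_cases h : k ∈ ball (0 : E) 1 <;> simp_all
    _ ≤ (∫⁻ k in ball 0 1 \ ball 0 ε, ENNReal.ofReal (F k / ‖k‖ ^ 2) ∂μ) +
          ∫⁻ k in (ball 0 1)ᶜ, ENNReal.ofReal (F k / ‖k‖ ^ 2) ∂μ :=
        lintegral_union_le _ _ _
    _ ≤ ENNReal.ofReal (4 * M * (q / (q - 1)) * ε ^ (s - 2)) +
          ENNReal.ofReal (M * ε ^ (s - 2)) :=
        add_le_add (setLIntegral_ball_one_diff_ball_div_norm_sq_le hF hM hs hball_le hε0 hε1)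
          (hexterior.trans (ENNReal.ofReal_le_ofReal (le_mul_of_one_le_right hM hε)))
    _ = ENNReal.ofReal ((4 * M * (q / (q - 1)) + M) * ε ^ (s - 2)) := by
        rw [← ENNReal.ofReal_add (by positivity) (by positivity), add_mul]

end DyadicShells

theorem stmt_16_general {d : ℕ} (μ : Measure (EuclideanSpace ℝ (Fin d)))
    (f : EuclideanSpace ℝ (Fin d) → ℝ) (K α : ℝ) (hα1 : α < 1)
    (hf : MemLp f 2 μ)
    (hball : ∀ I : ℝ, 0 < I → I < 1 →
      ∫ k in Metric.ball (0 : EuclideanSpace ℝ (Fin d)) I, (f k) ^ 2 ∂μ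
        ≤ K * I ^ (2 * α)) :
    ∃ C : ℝ, ∀ ε : ℝ, 0 < ε → ε < 1 →
      ∫ k in (Metric.ball (0 : EuclideanSpace ℝ (Fin d)) ε)ᶜ,
          (f k) ^ 2 / ‖k‖ ^ 2 ∂μ ≤ C * ε ^ (2 * (α - 1)) := by
  have hsq (k : EuclideanSpace ℝ (Fin d)) : 0 ≤ f k ^ 2 := sq_nonneg _
  have hlint (s : Set (EuclideanSpace ℝ (Fin d))) :
      ∫⁻ k in s, ENNReal.ofReal (f k ^ 2) ∂μ = ENNReal.ofReal (∫ k in s, f k ^ 2 ∂μ) :=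
    (ofReal_integral_eq_lintegral_ofReal hf.integrable_sq.integrableOn (ae_of_all _ hsq)).symm
  set T := ∫ k, f k ^ 2 ∂μ
  obtain ⟨C, hC0, hC⟩ := exists_setLIntegral_compl_ball_div_norm_sq_le (μ := μ) hsq
    (le_max_of_le_right (integral_nonneg hsq) : 0 ≤ max K T) (by linarith : 2 * α < 2)
    (fun a ha0 ha1 => by
      rw [hlint]
      exact ENNReal.ofReal_le_ofReal ((hball a ha0 ha1).trans
        (by gcongr; exact le_max_left _ _)))
    (by
      rw [← setLIntegral_univ, hlint, setIntegral_univ]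
      exact ENNReal.ofReal_le_ofReal (le_max_right _ _))
  have hmeas : AEMeasurable (fun k => f k ^ 2 / ‖k‖ ^ 2) μ := by
    have := hf.1.aemeasurable
    fun_prop
  refine ⟨C, fun ε hε0 hε1 => ?_⟩
  rw [integral_eq_lintegral_of_nonneg_ae (ae_of_all _ fun k => by positivity)
    hmeas.aestronglyMeasurable.restrict, show 2 * (α - 1) = 2 * α - 2 by ring]
  exact ENNReal.toReal_le_of_le_ofReal (by positivity) (hC ε hε0 hε1.le)

/-- Friedrichs-model estimate, `0 < α < 1`: if `∫_{B_I} |f|² dμ ≤ K I^{2α}`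
for `0 < I < 1` and `f ∈ L²(μ)`, then
`∫_{ℝ^d ∖ B_ε} |f(k)|²/|k|² dμ(k) ≤ C ε^{2(α−1)}` for all `0 < ε < 1`. -/
theorem stmt_16 {d : ℕ} (μ : Measure (EuclideanSpace ℝ (Fin d)))
    [IsFiniteMeasure μ]
    (f : EuclideanSpace ℝ (Fin d) → ℝ) (K α : ℝ) (hα0 : 0 < α) (hα1 : α < 1)
    (hf : MemLp f 2 μ)
    (hball : ∀ I : ℝ, 0 < I → I < 1 →
      ∫ k in Metric.ball (0 : EuclideanSpace ℝ (Fin d)) I, (f k) ^ 2 ∂μ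
        ≤ K * I ^ (2 * α)) :
    ∃ C : ℝ, ∀ ε : ℝ, 0 < ε → ε < 1 →
      ∫ k in (Metric.ball (0 : EuclideanSpace ℝ (Fin d)) ε)ᶜ,
          (f k) ^ 2 / ‖k‖ ^ 2 ∂μ ≤ C * ε ^ (2 * (α - 1)) :=
  stmt_16_general μ f K α hα1 hf hball
end
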